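/- Let G = 𝔅₄ = ⟨σ₁, σ₂, σ₃ | σ₁σ₃ = σ₃σ₁, σ₁σ₂σ₁ = σ₂σ₁σ₂, σ₂σ₃σ₂ = σ₃σ₂σ₃⟩ be the braid group on four strands. Its abelianization is infinite cyclic, with each σᵢ mapping to the same generator. Regard the rationalized Alexander module G'/G'' ⊗_ℤ ℚ as a module over ℚ[t, t⁻¹], where t acts via conjugation by σ₁. Then G'/G'' ⊗_ℤ ℚ ≅ ℚ[t,t⁻¹]/(t² − t + 1) as ℚ[t,t⁻¹]-modules; in particular the zeroth-order degree of 𝔅₄ is δ₀ = dim_ℚ( G'/G'' ⊗ ℚ ) = 2. -/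

import Mathlib

/-!
All three generators are conjugate, so `𝔅₄^ab ≅ ℤ` via the exponent sum. Because `σ₁` generates
the quotient `𝔅₄/𝔅₄' ≅ ℤ`, a Reidemeister–Schreier argument shows that `𝔅₄'` is generated by the
`σ₁`-conjugates of `u = σ₂σ₁⁻¹` together with `v = σ₃σ₁⁻¹`, which commutes with `σ₁`. Writing
`α, β` for the classes of `u, v` in `M = 𝔅₄'/𝔅₄'' ⊗ ℚ`, the two braid relations become
`tα = α + t²α` and `α + tβ + t²α = β + tα + t²β`, so `β = 0`: the module `M` is cyclic on `α`
and killed by `t² - t + 1`. Hence `f ↦ f(t)α` maps `Q = ℚ[t^±]/(t² - t + 1)` onto `M`.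
Conversely, the affine representation `σ₁, σ₃ ↦ (x ↦ tx)`, `σ₂ ↦ (x ↦ tx + 1)` of `𝔅₄` on `Q`
sends `𝔅₄'` to translations, which gives a `t`-equivariant map `M → Q` with `α ↦ 1`; the two maps
are inverse to each other. Finally `Q ≅ ℚ[X]/(X² - X + 1)`, as `X` is already invertible there.
-/

open scoped TensorProduct
open FreeGroup

/-- The standard Artin relators of the braid group `𝔅₄`, with `σᵢ = of (i-1)`. -/
def braidRels : Set (FreeGroup (Fin 3)) :=
  {of 0 * of 2 * (of 2 * of 0)⁻¹,
    of 0 * of 1 * of 0 * (of 1 * of 0 * of 1)⁻¹,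
    of 1 * of 2 * of 1 * (of 2 * of 1 * of 2)⁻¹}

/-- The braid group on four strands. -/
def BraidFour : Type := PresentedGroup braidRels

instance : Group BraidFour := by unfold BraidFour; infer_instance

variable {G : Type*} [Group G]

/-- Conjugation by `g` on the abelianization of a normal subgroup. -/
def conjAb (N : Subgroup G) [N.Normal] (g : G) :
    Abelianization ↥N →* Abelianization ↥N :=
  Abelianization.map (MulAut.conjNormal g).toMonoidHom

theorem conjAb_one (N : Subgroup G) [N.Normal] : conjAb N 1 = MonoidHom.id _ := by
  apply Abelianization.hom_ext
  ext x
  simp [conjAb]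

theorem conjAb_mul (N : Subgroup G) [N.Normal] (g h : G) :
    conjAb N (g * h) = (conjAb N g).comp (conjAb N h) := by
  apply Abelianization.hom_ext
  ext x
  simp [conjAb, map_mul]

/-- The conjugation action of `G` on the abelianization of a normal subgroup, as a
monoid homomorphism into the `ℤ`-linear endomorphisms. -/
def conjAct (N : Subgroup G) [N.Normal] :
    G →* Module.End ℤ (Additive (Abelianization ↥N)) where
  toFun g := (MonoidHom.toAdditive (conjAb N g)).toIntLinearMap
  map_one' := by rw [conjAb_one]; rfl
  map_mul' g h := by rw [conjAb_mul]; rfl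

noncomputable section

/-- The rationalized Alexander module `G'/G'' ⊗_ℤ ℚ` of the braid group `𝔅₄`. -/
def AlexQ : Type :=
  ℚ ⊗[ℤ] Additive (Abelianization ↥(commutator BraidFour))

instance : AddCommGroup AlexQ := by unfold AlexQ; infer_instance
instance : Module ℚ AlexQ := by unfold AlexQ; infer_instance

/-- The action of `t` on `G'/G'' ⊗_ℤ ℚ`, namely conjugation by `σ₁`. -/
def tAction : Module.End ℚ AlexQ :=
  Module.End.baseChangeHom ℤ ℚ (Additive (Abelianization ↥(commutator BraidFour)))
    (conjAct (commutator BraidFour) (PresentedGroup.of (rels := braidRels) 0))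

/-- Reidemeister–Schreier for an infinite cyclic quotient: the elements `g` with
`g * g₀ ^ (-d g) ∈ H` form a subgroup, which contains `S`. -/
theorem ker_le_of_mul_zpow_mem {S : Set G} (hS : Subgroup.closure S = ⊤)
    (d : G →* Multiplicative ℤ) {H : Subgroup G} {g₀ : G}
    (hg₀ : g₀ ∈ Subgroup.normalizer (H : Set G))
    (hgen : ∀ s ∈ S, s * g₀ ^ (-(d s).toAdd) ∈ H) : d.ker ≤ H := by
  have hconj (k : ℤ) {h : G} (hh : h ∈ H) : g₀ ^ k * h * g₀ ^ (-k) ∈ H := by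
    rw [zpow_neg]
    exact (Subgroup.mem_normalizer_iff.mp (zpow_mem hg₀ k) h).mp hh
  have key (g : G) : g * g₀ ^ (-(d g).toAdd) ∈ H := by
    induction (hS ▸ Subgroup.mem_top g : g ∈ Subgroup.closure S)
      using Subgroup.closure_induction with
    | mem s hs => exact hgen s hs
    | one => simp
    | mul a b _ _ ha hb =>
      simpa [mul_assoc, zpow_add, zpow_neg] using mul_mem ha (hconj (d a).toAdd hb)
    | inv a _ ha => simpa [mul_assoc, zpow_neg] using hconj (-(d a).toAdd) (inv_mem ha)
  intro g hg
  simpa [MonoidHom.mem_ker.mp hg] using key g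

theorem eq_of_mul_mul_eq {A : Type*} [CommGroup A] {a b : A} (h : a * b * a = b * a * b) :
    a = b := by
  rwa [mul_comm a b, mul_right_inj] at h

theorem mul_inv_mem_commutator_of_eq {a b : G}
    (h : Abelianization.of a = Abelianization.of b) : a * b⁻¹ ∈ commutator G := by
  rw [← Abelianization.ker_of, MonoidHom.mem_ker, _root_.map_mul, _root_.map_inv, h,
    mul_inv_cancel]

def abelianizationEquivOfGenerators {S : Set G} (hS : Subgroup.closure S = ⊤) {s₀ : G}
    (hs₀ : s₀ ∈ S) (hab : ∀ s ∈ S, Abelianization.of s = Abelianization.of s₀)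
    (d : G →* Multiplicative ℤ) (hd : ∀ s ∈ S, d s = Multiplicative.ofAdd 1) :
    Abelianization G ≃* Multiplicative ℤ :=
  MonoidHom.toMulEquiv (Abelianization.lift d) (zpowersHom _ (Abelianization.of s₀))
    (Abelianization.hom_ext _ _ <| MonoidHom.eq_of_eqOn_dense hS fun s hs => by
      simp [hd s₀ hs₀, hab s hs])
    (MonoidHom.ext_mint <| by simp [hd s₀ hs₀])

theorem abelianizationEquivOfGenerators_of {S : Set G} (hS : Subgroup.closure S = ⊤) {s₀ : G}
    (hs₀ : s₀ ∈ S) (hab : ∀ s ∈ S, Abelianization.of s = Abelianization.of s₀)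
    (d : G →* Multiplicative ℤ) (hd : ∀ s ∈ S, d s = Multiplicative.ofAdd 1) (g : G) :
    abelianizationEquivOfGenerators hS hs₀ hab d hd (Abelianization.of g) = d g :=
  Abelianization.lift_apply_of d g

section RationalAbelianization

variable (N : Subgroup G)

def ratClass : Additive N →+ ℚ ⊗[ℤ] Additive (Abelianization N) :=
  (TensorProduct.mk ℤ ℚ _ 1).toAddMonoidHom.comp (MonoidHom.toAdditive Abelianization.of)

def ratConjAct [N.Normal] : G →* Module.End ℚ (ℚ ⊗[ℤ] Additive (Abelianization N)) :=
  (Module.End.baseChangeHom ℤ ℚ _).toMonoidHom.comp (conjAct N)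

theorem ratConjAct_ratClass [N.Normal] (g : G) (n : N) :
    ratConjAct N g (ratClass N (.ofMul n)) = ratClass N (.ofMul (MulAut.conjNormal g n)) :=
  rfl

variable {N} in
theorem span_ratClass_eq_top {S : Set G} (hS : Subgroup.closure S = N) :
    Submodule.span ℚ {x | ∃ n : N, (n : G) ∈ S ∧ ratClass N (.ofMul n) = x} = ⊤ := by
  subst hS
  set M := Submodule.span ℚ
    {x | ∃ n : Subgroup.closure S, (n : G) ∈ S ∧ ratClass (Subgroup.closure S) (.ofMul n) = x}
  have hclass (n : Subgroup.closure S) : ratClass _ (.ofMul n) ∈ M := by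
    have hn := Subgroup.closure_closure_coe_preimage (k := S) ▸ Subgroup.mem_top n
    induction hn using Subgroup.closure_induction with
    | mem n hn => exact Submodule.subset_span ⟨n, hn, rfl⟩
    | one => simp
    | mul a b _ _ ha hb => simpa using M.add_mem ha hb
    | inv a _ ha => simpa using M.neg_mem ha
  refine Submodule.eq_top_iff'.mpr fun x => ?_
  induction x using TensorProduct.induction_on with
  | zero => exact M.zero_mem
  | tmul r m =>
    obtain ⟨n, hn⟩ := QuotientGroup.mk_surjective m.toMul
    obtain rfl : m = .ofMul (Abelianization.of n) := congrArg Additive.ofMul hn.symm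
    simpa [ratClass, TensorProduct.smul_tmul'] using M.smul_mem r (hclass n)
  | add x y hx hy => exact M.add_mem hx hy

end RationalAbelianization

section AffineGroup

open SemidirectProduct

variable {A : Type*} [CommRing A]

def unitsMulAut : Aˣ →* MulAut (Multiplicative A) where
  toFun u := AddEquiv.toMultiplicative (DistribMulAction.toAddEquiv A u)
  map_one' := by ext x; exact one_mul x.toAdd
  map_mul' u v := by ext x; exact mul_assoc (u : A) v x.toAdd

@[simp]
theorem unitsMulAut_apply (u : Aˣ) (x : Multiplicative A) :
    unitsMulAut u x = .ofAdd (u * x.toAdd) :=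
  rfl

variable (A) in
/-- `(a, u)` acts on `A` as `x ↦ u x + a`. -/
abbrev AffineGroup : Type _ := Multiplicative A ⋊[unitsMulAut] Aˣ

variable (f : G →* AffineGroup A)

theorem right_eq_one_of_mem_commutator {n : G} (hn : n ∈ commutator G) : (f n).right = 1 :=
  Abelianization.commutator_subset_ker (rightHom.comp f) hn

def translationPart : commutator G →* Multiplicative A where
  toFun n := (f n).left
  map_one' := by simp
  map_mul' a b := by simp [right_eq_one_of_mem_commutator f a.2]

theorem translationPart_conjNormal (g : G) (n : commutator G) :
    translationPart f (MulAut.conjNormal g n) = unitsMulAut (f g).right (translationPart f n) := by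
  have hn : f n = inl (translationPart f n) := by
    rw [← inl_left_mul_inr_right (f n), right_eq_one_of_mem_commutator f n.2]
    simp [translationPart]
  change (f (g * n * g⁻¹)).left = _
  rw [_root_.map_mul, _root_.map_mul, _root_.map_inv, hn]
  simp only [mul_left, inv_left, left_inl, mul_right, right_inl, mul_one, ← MulAut.mul_apply,
    ← _root_.map_mul, mul_inv_cancel, _root_.map_one, MulAut.one_apply]
  rw [mul_comm, inv_mul_cancel_left]

variable [Algebra ℚ A]

def ratTranslationPart : ℚ ⊗[ℤ] Additive (Abelianization (commutator G)) →ₗ[ℚ] A :=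
  LinearMap.liftBaseChange ℚ
    (MonoidHom.toAdditiveLeft (Abelianization.lift (translationPart f))).toIntLinearMap

theorem ratTranslationPart_ratClass (n : commutator G) :
    ratTranslationPart f (ratClass _ (.ofMul n)) = (f n).left.toAdd := by
  simp [ratTranslationPart, ratClass, translationPart]

theorem ratTranslationPart_ratConjAct (g : G)
    (x : ℚ ⊗[ℤ] Additive (Abelianization (commutator G))) :
    ratTranslationPart f (ratConjAct _ g x) = (f g).right * ratTranslationPart f x := by
  suffices ratTranslationPart f ∘ₗ ratConjAct _ g =
      LinearMap.mulLeft ℚ ((f g).right : A) ∘ₗ ratTranslationPart f from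
    LinearMap.congr_fun this x
  refine LinearMap.ext_on (span_ratClass_eq_top (Subgroup.closure_eq _)) ?_
  rintro _ ⟨n, -, rfl⟩
  simp only [LinearMap.comp_apply, ratConjAct_ratClass, ratTranslationPart_ratClass,
    LinearMap.mulLeft_apply]
  exact congrArg Multiplicative.toAdd (translationPart_conjNormal f g n)

end AffineGroup

section LaurentQuotient

open Polynomial

variable {R A : Type*} [CommRing R] [Semiring A] [Algebra R A]

namespace LaurentPolynomial

def aevalUnit (u : Aˣ) : LaurentPolynomial R →ₐ[R] A :=
  AddMonoidAlgebra.lift R A ℤ ((Units.coeHom A).comp (zpowersHom Aˣ u))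

@[simp]
theorem aevalUnit_T (u : Aˣ) (n : ℤ) : aevalUnit (R := R) u (T n) = ↑(u ^ n) := by
  rw [aevalUnit, T, AddMonoidAlgebra.lift_single]
  simp

@[simp]
theorem aevalUnit_toLaurent (u : Aˣ) (q : R[X]) : aevalUnit u (toLaurent q) = aeval (u : A) q := by
  rw [← toLaurentAlg_apply, ← AlgHom.comp_apply]
  congr 1
  exact Polynomial.algHom_ext (by simp)

theorem algHom_ext {f g : LaurentPolynomial R →ₐ[R] A} (h : f (T 1) = g (T 1)) : f = g :=
  AddMonoidAlgebra.algHom_ext' (MonoidHom.ext_mint h) (Subsingleton.elim _ _)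

end LaurentPolynomial

def laurentQuotientEquiv (p : R[X]) (u : (R[X] ⧸ Ideal.span {p})ˣ)
    (hu : (u : R[X] ⧸ Ideal.span {p}) = Ideal.Quotient.mk _ X) :
    (LaurentPolynomial R ⧸ Ideal.span {toLaurent p}) ≃ₐ[R] R[X] ⧸ Ideal.span {p} :=
  AlgEquiv.ofRingEquiv (f := RingEquiv.ofRingHom
    (Ideal.Quotient.lift _ (LaurentPolynomial.aevalUnit (R := R) u).toRingHom fun a ha => by
      obtain ⟨c, rfl⟩ := Ideal.mem_span_singleton'.mp ha
      rw [_root_.map_mul, AlgHom.toRingHom_eq_coe, RingHom.coe_coe,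
        LaurentPolynomial.aevalUnit_toLaurent, hu, ← Ideal.Quotient.mkₐ_eq_mk R,
        aeval_algHom_apply, aeval_X_left_apply, Ideal.Quotient.mkₐ_eq_mk,
        Ideal.Quotient.mk_singleton_self, mul_zero])
    (Ideal.quotientMap _ toLaurent <| Ideal.span_le.mpr <| by simp)
    (by
      apply Ideal.Quotient.ringHom_ext
      apply Polynomial.ringHom_ext <;> simp [hu, C_eq_algebraMap])
    (by
      apply Ideal.Quotient.ringHom_ext
      apply IsLocalization.ringHom_ext (Submonoid.powers (X : R[X]))
      apply Polynomial.ringHom_ext <;>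
        simp [hu, C_eq_algebraMap, -Ideal.Quotient.mk_comp_algebraMap]))
    (LaurentPolynomial.aevalUnit u).commutes

end LaurentQuotient

namespace BraidFour

open LaurentPolynomial SemidirectProduct

/-- The Artin generator `σᵢ₊₁` (generators are indexed from `0`). -/
def σ (i : Fin 3) : BraidFour := PresentedGroup.of i

theorem comm_zero_two : σ 0 * σ 2 = σ 2 * σ 0 :=
  PresentedGroup.mk_eq_mk_of_mul_inv_mem (x := of 0 * of 2) (y := of 2 * of 0)
    (by simp [braidRels])

theorem braid_zero_one : σ 0 * σ 1 * σ 0 = σ 1 * σ 0 * σ 1 :=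
  PresentedGroup.mk_eq_mk_of_mul_inv_mem (x := of 0 * of 1 * of 0) (y := of 1 * of 0 * of 1)
    (by simp [braidRels])

theorem braid_one_two : σ 1 * σ 2 * σ 1 = σ 2 * σ 1 * σ 2 :=
  PresentedGroup.mk_eq_mk_of_mul_inv_mem (x := of 1 * of 2 * of 1) (y := of 2 * of 1 * of 2)
    (by simp [braidRels])

theorem closure_range_σ : Subgroup.closure (Set.range σ) = ⊤ :=
  PresentedGroup.closure_range_of _

theorem abelianization_of_σ (i : Fin 3) : Abelianization.of (σ i) = Abelianization.of (σ 0) := by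
  have h01 := eq_of_mul_mul_eq (by simpa using congrArg Abelianization.of braid_zero_one)
  have h12 := eq_of_mul_mul_eq (by simpa using congrArg Abelianization.of braid_one_two)
  fin_cases i
  exacts [rfl, h01.symm, h12.symm.trans h01.symm]

def degree : BraidFour →* Multiplicative ℤ :=
  PresentedGroup.toGroup (f := fun _ => .ofAdd 1) fun r hr => by
    rcases hr with rfl | rfl | rfl <;> simp

@[simp]
theorem degree_σ (i : Fin 3) : degree (σ i) = .ofAdd 1 :=
  PresentedGroup.toGroup.of _

def abelianizationEquiv : Abelianization BraidFour ≃* Multiplicative ℤ :=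
  abelianizationEquivOfGenerators closure_range_σ (Set.mem_range_self 0)
    (by rintro _ ⟨i, rfl⟩; exact abelianization_of_σ i) degree (by rintro _ ⟨i, rfl⟩; simp)

theorem abelianizationEquiv_of (i : Fin 3) :
    abelianizationEquiv (Abelianization.of (σ i)) = .ofAdd 1 :=
  (abelianizationEquivOfGenerators_of ..).trans (degree_σ i)

def u : commutator BraidFour :=
  ⟨σ 1 * (σ 0)⁻¹, mul_inv_mem_commutator_of_eq (abelianization_of_σ 1)⟩

def v : commutator BraidFour :=
  ⟨σ 2 * (σ 0)⁻¹, mul_inv_mem_commutator_of_eq (abelianization_of_σ 2)⟩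

theorem commute_σ_v : Commute (σ 0) v := by
  rw [Commute, SemiconjBy, v, ← mul_assoc, comm_zero_two]
  group

theorem conj_u_eq : σ 0 * u * (σ 0)⁻¹ = u * (σ 0 ^ 2 * u * (σ 0 ^ 2)⁻¹) := by
  rw [show σ 0 * u * (σ 0)⁻¹ = σ 0 * σ 1 * σ 0 * (σ 0 ^ 3)⁻¹ by simp only [u]; group,
    braid_zero_one]
  simp only [u]
  group

theorem conj_u_mul_conj_v : u * (σ 0 * v * (σ 0)⁻¹) * (σ 0 ^ 2 * u * (σ 0 ^ 2)⁻¹) =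
    v * (σ 0 * u * (σ 0)⁻¹) * (σ 0 ^ 2 * v * (σ 0 ^ 2)⁻¹) := by
  rw [show u * (σ 0 * v * (σ 0)⁻¹) * (σ 0 ^ 2 * u * (σ 0 ^ 2)⁻¹) =
      σ 1 * σ 2 * σ 1 * (σ 0 ^ 3)⁻¹ by simp only [u, v]; group,
    braid_one_two]
  simp only [u, v]
  group

def commutatorGens : Set BraidFour :=
  Set.range (fun k : ℤ => σ 0 ^ k * u * (σ 0 ^ k)⁻¹) ∪ {(v : BraidFour)}

theorem closure_commutatorGens : Subgroup.closure commutatorGens = commutator BraidFour := by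
  apply le_antisymm
  · rw [Subgroup.closure_le]
    rintro _ (⟨k, rfl⟩ | rfl)
    exacts [(commutator BraidFour).normal_of_characteristic.conj_mem _ u.2 _, v.2]
  refine (Abelianization.commutator_subset_ker degree).trans
    (ker_le_of_mul_zpow_mem closure_range_σ degree (g₀ := σ 0) ?_ ?_)
  · refine Subgroup.le_normalizer_closure_iff.mpr ?_ (Subgroup.mem_zpowers (σ 0))
    rintro _ ⟨n, rfl⟩ _ (⟨k, rfl⟩ | rfl)
    · exact Subgroup.subset_closure (Or.inl ⟨n + k, by simp [zpow_add, mul_assoc]⟩)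
    · refine Subgroup.subset_closure (Or.inr ?_)
      rw [Set.mem_singleton_iff, (commute_σ_v.zpow_left n).eq, mul_inv_cancel_right]
  · rintro _ ⟨i, rfl⟩
    fin_cases i
    · simp
    · exact Subgroup.subset_closure (Or.inl ⟨0, by simp [u]⟩)
    · exact Subgroup.subset_closure (Or.inr (by simp [v]))

def α : ℚ ⊗[ℤ] Additive (Abelianization (commutator BraidFour)) := ratClass _ (.ofMul u)

def β : ℚ ⊗[ℤ] Additive (Abelianization (commutator BraidFour)) := ratClass _ (.ofMul v)

theorem ratConjAct_zpow_α (k : ℤ) :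
    ratConjAct _ (σ 0 ^ k) α = ratClass _ (.ofMul (MulAut.conjNormal (σ 0 ^ k) u)) :=
  ratConjAct_ratClass _ _ _

theorem ratConjAct_zpow_β (k : ℤ) : ratConjAct _ (σ 0 ^ k) β = β := by
  rw [β, ratConjAct_ratClass]
  congr 2
  ext
  rw [MulAut.conjNormal_apply, (commute_σ_v.zpow_left k).eq, mul_inv_cancel_right]

theorem ratConjAct_zpow_one_α :
    ratConjAct _ (σ 0 ^ (1 : ℤ)) α = α + ratConjAct _ (σ 0 ^ (2 : ℤ)) α := by
  have h : MulAut.conjNormal (σ 0 ^ (1 : ℤ)) u = u * MulAut.conjNormal (σ 0 ^ (2 : ℤ)) u :=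
    Subtype.ext <| by
      simpa only [Subgroup.coe_mul, MulAut.conjNormal_apply, zpow_one, zpow_ofNat, pow_one]
        using conj_u_eq
  rw [ratConjAct_zpow_α, ratConjAct_zpow_α, h, ofMul_mul, map_add]
  rfl

theorem β_eq_zero : β = 0 := by
  have h : u * MulAut.conjNormal (σ 0 ^ (1 : ℤ)) v * MulAut.conjNormal (σ 0 ^ (2 : ℤ)) u =
      v * MulAut.conjNormal (σ 0 ^ (1 : ℤ)) u * MulAut.conjNormal (σ 0 ^ (2 : ℤ)) v :=
    Subtype.ext <| by
      simpa only [Subgroup.coe_mul, MulAut.conjNormal_apply, zpow_one, zpow_ofNat, pow_one]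
        using conj_u_mul_conj_v
  have h' := congrArg (fun n => ratClass (commutator BraidFour) (.ofMul n)) h
  simp only [ofMul_mul, map_add, ← ratConjAct_ratClass] at h'
  change α + ratConjAct _ _ β + ratConjAct _ _ α = β + ratConjAct _ _ α + ratConjAct _ _ β at h'
  rw [ratConjAct_zpow_β, ratConjAct_zpow_β, ratConjAct_zpow_one_α] at h'
  linear_combination (norm := module) -h'

theorem span_range_ratConjAct_zpow_α :
    Submodule.span ℚ (Set.range fun k : ℤ => ratConjAct (commutator BraidFour) (σ 0 ^ k) α) =
      ⊤ := by
  refine eq_top_iff.mpr <| (span_ratClass_eq_top closure_commutatorGens).ge.trans <|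
    Submodule.span_le.mpr ?_
  rintro _ ⟨n, ⟨k, hk⟩ | hv, rfl⟩
  · obtain rfl : n = MulAut.conjNormal (σ 0 ^ k) u := Subtype.ext hk.symm
    exact Submodule.subset_span ⟨k, ratConjAct_zpow_α k⟩
  · obtain rfl : n = v := Subtype.ext hv
    change β ∈ _
    rw [β_eq_zero]
    exact zero_mem _

section AffineRepresentation

variable {A : Type*} [CommRing A] (τ : Aˣ)

theorem affine_braid_relation (hτ : (τ : A) ^ 2 - τ + 1 = 0) :
    (inr τ : AffineGroup A) * (inl (.ofAdd 1) * inr τ) * inr τ =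
      inl (.ofAdd 1) * inr τ * inr τ * (inl (.ofAdd 1) * inr τ) := by
  ext
  · have : (τ : A) = 1 + τ * τ := by linear_combination -hτ
    simpa using this
  · simp

/-- `σ₁, σ₃ ↦ (x ↦ τ x)` and `σ₂ ↦ (x ↦ τ x + 1)`. -/
def affineRep (hτ : (τ : A) ^ 2 - τ + 1 = 0) : BraidFour →* AffineGroup A :=
  PresentedGroup.toGroup (f := ![inr τ, inl (.ofAdd 1) * inr τ, inr τ]) <| by
    rintro _ (rfl | rfl | rfl) <;>
      simp only [_root_.map_mul, _root_.map_inv, FreeGroup.lift_apply_of, mul_inv_eq_one]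
    · rfl
    · exact affine_braid_relation τ hτ
    · exact (affine_braid_relation τ hτ).symm

variable (hτ : (τ : A) ^ 2 - τ + 1 = 0)

@[simp]
theorem affineRep_σ (i : Fin 3) :
    affineRep τ hτ (σ i) = ![inr τ, inl (.ofAdd 1) * inr τ, inr τ] i :=
  PresentedGroup.toGroup.of _

theorem right_affineRep_σ_zpow (k : ℤ) : (affineRep τ hτ (σ 0 ^ k)).right = τ ^ k := by
  change rightHom (affineRep τ hτ (σ 0 ^ k)) = _
  simp [map_zpow]

theorem left_affineRep_u : (affineRep τ hτ u).left = .ofAdd 1 := by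
  simp [u]

end AffineRepresentation

abbrev AlexanderQuotient : Type :=
  LaurentPolynomial ℚ ⧸ Ideal.span {(T 2 - T 1 + 1 : LaurentPolynomial ℚ)}

local notation "mk" => Ideal.Quotient.mk (Ideal.span {(T 2 - T 1 + 1 : LaurentPolynomial ℚ)})

def τ : AlexanderQuotientˣ where
  val := mk (T 1)
  inv := mk (T (-1))
  val_inv := by rw [← _root_.map_mul, ← T_add, add_neg_cancel, T_zero, _root_.map_one]
  inv_val := by rw [← _root_.map_mul, ← T_add, neg_add_cancel, T_zero, _root_.map_one]

theorem τ_sq_sub_τ_add_one : (τ : AlexanderQuotient) ^ 2 - τ + 1 = 0 := by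
  have h := Ideal.Quotient.mk_singleton_self (T 2 - T 1 + 1 : LaurentPolynomial ℚ)
  simp only [_root_.map_add, _root_.map_sub, _root_.map_one] at h
  simpa [τ, ← _root_.map_pow, T_pow] using h

theorem coe_τ_zpow (k : ℤ) : ((τ ^ k : AlexanderQuotientˣ) : AlexanderQuotient) = mk (T k) := by
  have h : aevalUnit τ = Ideal.Quotient.mkₐ ℚ _ := algHom_ext (by simp [τ])
  rw [← aevalUnit_T (R := ℚ), h, Ideal.Quotient.mkₐ_eq_mk]

def alexanderMap :
    ℚ ⊗[ℤ] Additive (Abelianization (commutator BraidFour)) →ₗ[ℚ] AlexanderQuotient :=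
  ratTranslationPart (affineRep τ τ_sq_sub_τ_add_one)

theorem alexanderMap_α : alexanderMap α = 1 := by
  rw [alexanderMap, α, ratTranslationPart_ratClass, left_affineRep_u]
  rfl

theorem alexanderMap_ratConjAct (k : ℤ)
    (x : ℚ ⊗[ℤ] Additive (Abelianization (commutator BraidFour))) :
    alexanderMap (ratConjAct _ (σ 0 ^ k) x) = mk (T k) * alexanderMap x := by
  rw [alexanderMap, ratTranslationPart_ratConjAct, right_affineRep_σ_zpow, coe_τ_zpow]

def orbitMap :
    LaurentPolynomial ℚ →ₗ[ℚ] ℚ ⊗[ℤ] Additive (Abelianization (commutator BraidFour)) :=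
  LinearMap.applyₗ α ∘ₗ (aevalUnit ((ratConjAct _).toHomUnits (σ 0))).toLinearMap

theorem orbitMap_T (k : ℤ) : orbitMap (T k) = ratConjAct _ (σ 0 ^ k) α := by
  simp [orbitMap, ← map_zpow]

theorem orbitMap_surjective : Function.Surjective orbitMap := by
  rw [← LinearMap.range_eq_top, eq_top_iff, ← span_range_ratConjAct_zpow_α, Submodule.span_le]
  rintro _ ⟨k, rfl⟩
  exact ⟨T k, orbitMap_T k⟩

theorem orbitMap_eq_zero_of_mem {f : LaurentPolynomial ℚ}
    (hf : f ∈ Ideal.span {(T 2 - T 1 + 1 : LaurentPolynomial ℚ)}) : orbitMap f = 0 := by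
  obtain ⟨c, rfl⟩ := Ideal.mem_span_singleton'.mp hf
  have hΔ : orbitMap (T 2 - T 1 + 1) = 0 := by
    rw [← T_zero, map_add, map_sub, orbitMap_T, orbitMap_T, orbitMap_T, ratConjAct_zpow_one_α,
      zpow_zero, _root_.map_one, Module.End.one_apply]
    abel
  have hmul : orbitMap (c * (T 2 - T 1 + 1)) =
      aevalUnit ((ratConjAct _).toHomUnits (σ 0)) c (orbitMap (T 2 - T 1 + 1)) := by
    simp [orbitMap]
  rw [hmul, hΔ, map_zero]

theorem alexanderMap_orbitMap (f : LaurentPolynomial ℚ) : alexanderMap (orbitMap f) = mk f := by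
  suffices alexanderMap ∘ₗ orbitMap = (Ideal.Quotient.mkₐ ℚ _).toLinearMap from
    LinearMap.congr_fun this f
  ext k
  change alexanderMap (orbitMap (T k)) = mk (T k)
  rw [orbitMap_T, alexanderMap_ratConjAct, alexanderMap_α, mul_one]

theorem alexanderMap_bijective : Function.Bijective alexanderMap := by
  refine ⟨(injective_iff_map_eq_zero _).mpr fun x hx => ?_, fun y => ?_⟩
  · obtain ⟨f, rfl⟩ := orbitMap_surjective x
    rw [alexanderMap_orbitMap, Ideal.Quotient.eq_zero_iff_mem] at hx
    exact orbitMap_eq_zero_of_mem hx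
  · obtain ⟨f, rfl⟩ := Ideal.Quotient.mk_surjective y
    exact ⟨orbitMap f, alexanderMap_orbitMap f⟩

open Polynomial in
theorem finrank_alexanderQuotient : Module.finrank ℚ AlexanderQuotient = 2 := by
  let I : Ideal ℚ[X] := Ideal.span {X ^ 2 - X + 1}
  have hX : Ideal.Quotient.mk I X * Ideal.Quotient.mk I (1 - X) = 1 := by
    rw [← _root_.map_mul, ← _root_.map_one (Ideal.Quotient.mk I), Ideal.Quotient.eq,
      Ideal.mem_span_singleton]
    exact Dvd.intro (-1) (by ring)
  have hΔ : (T 2 - T 1 + 1 : LaurentPolynomial ℚ) = toLaurent (X ^ 2 - X + 1) := by simp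
  unfold AlexanderQuotient
  rw [hΔ, (laurentQuotientEquiv _ (Units.mkOfMulEqOne _ _ hX) rfl).toLinearEquiv.finrank_eq,
    finrank_quotient_span_eq_natDegree]
  compute_degree!

end BraidFour

theorem braid_four_alexander_module :
    (∃ e : Abelianization BraidFour ≃* Multiplicative ℤ,
      ∀ i : Fin 3, e (Abelianization.of (PresentedGroup.of (rels := braidRels) i)) =
        Multiplicative.ofAdd 1) ∧
    (∃ e : AlexQ ≃ₗ[ℚ]
        (LaurentPolynomial ℚ ⧸
          Ideal.span {(LaurentPolynomial.T 2 - LaurentPolynomial.T 1 + 1 : LaurentPolynomial ℚ)}),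
      ∀ a : AlexQ, e (tAction a) =
        Ideal.Quotient.mk (Ideal.span {(LaurentPolynomial.T 2 - LaurentPolynomial.T 1 + 1 : LaurentPolynomial ℚ)})
          (LaurentPolynomial.T 1) * e a) ∧
    Module.finrank ℚ AlexQ = 2 := by
  let e := LinearEquiv.ofBijective _ BraidFour.alexanderMap_bijective
  refine ⟨⟨_, BraidFour.abelianizationEquiv_of⟩, ⟨e, fun a => ?_⟩,
    e.finrank_eq.trans BraidFour.finrank_alexanderQuotient⟩
  have h := BraidFour.alexanderMap_ratConjAct 1 a
  rw [zpow_one] at h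
  exact h
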